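/- For every integer d₃ ≥ 4 with d₃ ≠ 5, there exists a tame polynomial automorphism F of ℂ³ with mdeg F = (3, 4, d₃). -/

import Mathlib

open MvPolynomial






/-- A polynomial automorphism of `ℂⁿ`, viewed as a `ℂ`-algebra automorphism of
`ℂ[x₁,…,xₙ]`, is *linear* if it sends each variable to a homogeneous polynomial
of degree `1` (i.e. it is induced by an invertible linear map). -/
def IsLinearAut {n : ℕ} (F : MvPolynomial (Fin n) ℂ ≃ₐ[ℂ] MvPolynomial (Fin n) ℂ) : Prop :=
  ∀ i : Fin n, (F (X i)).IsHomogeneous 1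

/-- A polynomial automorphism of `ℂⁿ` is *triangular* if it sends `x₁ ↦ x₁` and
`xᵢ ↦ xᵢ + fᵢ(x₁,…,x_{i-1})` for `i ≥ 2`, where each `fᵢ` only involves the
preceding variables. -/
def IsTriangularAut {n : ℕ} (F : MvPolynomial (Fin n) ℂ ≃ₐ[ℂ] MvPolynomial (Fin n) ℂ) : Prop :=
  (∀ i : Fin n, (i : ℕ) = 0 → F (X i) = X i) ∧
  ∀ i : Fin n, ∃ f : MvPolynomial (Fin n) ℂ,
    (∀ j ∈ f.vars, j < i) ∧ F (X i) = X i + f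

/-- A polynomial automorphism of `ℂⁿ` is *tame* if it lies in the subgroup of all
polynomial automorphisms generated by the linear and the triangular automorphisms. -/
def IsTame {n : ℕ} (F : MvPolynomial (Fin n) ℂ ≃ₐ[ℂ] MvPolynomial (Fin n) ℂ) : Prop :=
  F ∈ Subgroup.closure {G : MvPolynomial (Fin n) ℂ ≃ₐ[ℂ] MvPolynomial (Fin n) ℂ |
    IsLinearAut G ∨ IsTriangularAut G}

/-- The multidegree of a polynomial automorphism of `ℂⁿ`: the tuple of total degrees
of the images of the variables. -/
noncomputable def mdeg {n : ℕ} (F : MvPolynomial (Fin n) ℂ ≃ₐ[ℂ] MvPolynomial (Fin n) ℂ) :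
    Fin n → ℕ :=
  fun i => (F (X i)).totalDegree


noncomputable section AuxTame

/-- `T2`: triangular automorphism `x₀ ↦ x₀, x₁ ↦ x₁ + x₀³, x₂ ↦ x₂ + x₀⁴`. -/
noncomputable def T2aux : MvPolynomial (Fin 3) ℂ ≃ₐ[ℂ] MvPolynomial (Fin 3) ℂ :=
  AlgEquiv.ofAlgHom
    (aeval ![X 0, X 1 + X 0 ^ 3, X 2 + X 0 ^ 4])
    (aeval ![X 0, X 1 - X 0 ^ 3, X 2 - X 0 ^ 4])
    (by ext i : 1; fin_cases i <;> simp)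
    (by ext i : 1; fin_cases i <;> simp)

/-- `T1 a b`: triangular automorphism `x₀ ↦ x₀, x₁ ↦ x₁, x₂ ↦ x₂ + x₀ᵃ x₁ᵇ`. -/
noncomputable def T1aux (a b : ℕ) : MvPolynomial (Fin 3) ℂ ≃ₐ[ℂ] MvPolynomial (Fin 3) ℂ :=
  AlgEquiv.ofAlgHom
    (aeval ![X 0, X 1, X 2 + X 0 ^ a * X 1 ^ b])
    (aeval ![X 0, X 1, X 2 - X 0 ^ a * X 1 ^ b])
    (by ext i : 1; fin_cases i <;> simp)
    (by ext i : 1; fin_cases i <;> simp)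

/-- Cyclic permutation of variables, a linear automorphism. -/
noncomputable def Saux : MvPolynomial (Fin 3) ℂ ≃ₐ[ℂ] MvPolynomial (Fin 3) ℂ :=
  renameEquiv ℂ (finRotate 3)

lemma T2aux_X0 : T2aux (X 0) = X 0 := by simp [T2aux]
lemma T2aux_X1 : T2aux (X 1) = X 1 + X 0 ^ 3 := by simp [T2aux]
lemma T2aux_X2 : T2aux (X 2) = X 2 + X 0 ^ 4 := by simp [T2aux]
lemma T1aux_X0 (a b : ℕ) : T1aux a b (X 0) = X 0 := by simp [T1aux]
lemma T1aux_X1 (a b : ℕ) : T1aux a b (X 1) = X 1 := by simp [T1aux]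
lemma T1aux_X2 (a b : ℕ) : T1aux a b (X 2) = X 2 + X 0 ^ a * X 1 ^ b := by simp [T1aux]
lemma Saux_X (i : Fin 3) : Saux (X i) = X (finRotate 3 i) := by simp [Saux]

lemma isLinear_Saux : IsLinearAut Saux := by
  intro i; rw [Saux_X]; exact isHomogeneous_X _ _

lemma isTriangular_T2aux : IsTriangularAut T2aux := by
  constructor
  · intro i hi
    have : i = 0 := by omega
    subst this; exact T2aux_X0
  · intro i
    fin_cases i
    · exact ⟨0, by simp, by simpa using T2aux_X0⟩
    · refine ⟨X 0 ^ 3, ?_, T2aux_X1⟩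
      intro j hj
      have : j ∈ (X (0 : Fin 3) : MvPolynomial (Fin 3) ℂ).vars := vars_pow _ _ hj
      rw [vars_X] at this
      simp_all
    · refine ⟨X 0 ^ 4, ?_, T2aux_X2⟩
      intro j hj
      have : j ∈ (X (0 : Fin 3) : MvPolynomial (Fin 3) ℂ).vars := vars_pow _ _ hj
      rw [vars_X] at this
      simp_all

lemma isTriangular_T1aux (a b : ℕ) : IsTriangularAut (T1aux a b) := by
  constructor
  · intro i hi
    have : i = 0 := by omega
    subst this; exact T1aux_X0 a b
  · intro i
    fin_cases i
    · exact ⟨0, by simp, by simpa using T1aux_X0 a b⟩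
    · exact ⟨0, by simp, by simpa using T1aux_X1 a b⟩
    · refine ⟨X 0 ^ a * X 1 ^ b, ?_, T1aux_X2 a b⟩
      intro j hj
      have h1 := vars_mul (X (0:Fin 3) ^ a) (X 1 ^ b) hj
      rcases Finset.mem_union.1 h1 with h2 | h2
      · have : j ∈ (X (0 : Fin 3) : MvPolynomial (Fin 3) ℂ).vars := vars_pow _ _ h2
        rw [vars_X] at this
        simp_all
      · have : j ∈ (X (1 : Fin 3) : MvPolynomial (Fin 3) ℂ).vars := vars_pow _ _ h2
        rw [vars_X] at this
        simp_all

/-- Leading–coefficient bookkeeping: `p` has total degree ≤ d and the coefficient of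
`x₀ᵈ` equals 1. -/
def Lead (p : MvPolynomial (Fin 3) ℂ) (d : ℕ) : Prop :=
  p.totalDegree ≤ d ∧ coeff (Finsupp.single 0 d) p = 1

lemma single_sum (m : ℕ) : ∑ i ∈ (Finsupp.single (0:Fin 3) m).support, (Finsupp.single (0:Fin 3) m) i = m := by
  rcases eq_or_ne m 0 with rfl | hm
  · simp
  · rw [Finsupp.support_single_ne_zero _ hm]; simp

lemma lead_mul {p q : MvPolynomial (Fin 3) ℂ} {d e : ℕ}
    (hp : Lead p d) (hq : Lead q e) : Lead (p * q) (d + e) := by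
  obtain ⟨hpd, hpc⟩ := hp
  obtain ⟨hqd, hqc⟩ := hq
  constructor
  · exact (totalDegree_mul p q).trans (add_le_add hpd hqd)
  · rw [coeff_mul]
    rw [Finset.sum_eq_single (Finsupp.single 0 d, Finsupp.single 0 e)]
    · rw [hpc, hqc, one_mul]
    · rintro ⟨u, v⟩ huv hne
      rw [Finset.HasAntidiagonal.mem_antidiagonal] at huv
      -- u, v are supported at 0
      have hu0 : ∀ j : Fin 3, j ≠ 0 → u j = 0 := by
        intro j hj
        have := congrFun (congrArg (fun f : Fin 3 →₀ ℕ => (f : Fin 3 → ℕ)) huv) j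
        simp [Finsupp.single_apply, hj.symm] at this
        omega
      have hv0 : ∀ j : Fin 3, j ≠ 0 → v j = 0 := by
        intro j hj
        have := congrFun (congrArg (fun f : Fin 3 →₀ ℕ => (f : Fin 3 → ℕ)) huv) j
        simp [Finsupp.single_apply, hj.symm] at this
        omega
      have hu : u = Finsupp.single 0 (u 0) := by
        ext j; rcases eq_or_ne j 0 with rfl | hj
        · simp
        · simp [Finsupp.single_apply, hj.symm, hu0 j hj]
      have hv : v = Finsupp.single 0 (v 0) := by
        ext j; rcases eq_or_ne j 0 with rfl | hj
        · simp
        · simp [Finsupp.single_apply, hj.symm, hv0 j hj]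
      have hsum : u 0 + v 0 = d + e := by
        have := congrFun (congrArg (fun f : Fin 3 →₀ ℕ => (f : Fin 3 → ℕ)) huv) 0
        simpa using this
      rcases lt_trichotomy (u 0) d with hlt | heq | hgt
      · -- then v 0 > e, coeff v q = 0
        have : coeff v q = 0 := by
          apply coeff_eq_zero_of_totalDegree_lt
          rw [hv, single_sum]
          omega
        rw [this, mul_zero]
      · -- then u = single 0 d, v = single 0 e, contradiction
        exfalso
        apply hne
        have hv' : v 0 = e := by omega
        rw [Prod.ext_iff]
        exact ⟨by rw [hu, heq], by rw [hv, hv']⟩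
      · have : coeff u p = 0 := by
          apply coeff_eq_zero_of_totalDegree_lt
          rw [hu, single_sum]
          omega
        rw [this, zero_mul]
    · intro hmem
      exfalso
      apply hmem
      rw [Finset.HasAntidiagonal.mem_antidiagonal]
      rw [← Finsupp.single_add]

lemma lead_pow {p : MvPolynomial (Fin 3) ℂ} {d : ℕ} (hp : Lead p d) (n : ℕ) :
    Lead (p ^ n) (n * d) := by
  induction n with
  | zero => constructor <;> simp [Lead, coeff_one]
  | succ k ih =>
    have hk : (k + 1) * d = k * d + d := by ring
    rw [pow_succ, hk]
    exact lead_mul ih hp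

lemma lead_P : Lead (X 1 + X 0 ^ 3) 3 := by
  constructor
  · refine (totalDegree_add _ _).trans ?_
    simp [totalDegree_X, totalDegree_X_pow]
  · rw [coeff_add, X_pow_eq_monomial, coeff_monomial, if_pos rfl]
    rw [coeff_X', if_neg, zero_add]
    intro hcontra
    have := congrFun (congrArg (fun f : Fin 3 →₀ ℕ => (f : Fin 3 → ℕ)) hcontra) 1
    simp [Finsupp.single_apply] at this

lemma lead_Q : Lead (X 2 + X 0 ^ 4) 4 := by
  constructor
  · refine (totalDegree_add _ _).trans ?_
    simp [totalDegree_X, totalDegree_X_pow]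
  · rw [coeff_add, X_pow_eq_monomial, coeff_monomial, if_pos rfl]
    rw [coeff_X', if_neg, zero_add]
    intro hcontra
    have := congrFun (congrArg (fun f : Fin 3 →₀ ℕ => (f : Fin 3 → ℕ)) hcontra) 2
    simp [Finsupp.single_apply] at this

lemma totalDegree_of_lead {p : MvPolynomial (Fin 3) ℂ} {d : ℕ} (hd : 0 < d) (hp : Lead p d) :
    p.totalDegree = d := by
  refine le_antisymm hp.1 ?_
  have hmem : Finsupp.single (0 : Fin 3) d ∈ p.support := by
    rw [mem_support_iff, hp.2]; exact one_ne_zero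
  have := le_totalDegree hmem
  simpa using this

lemma lead_add_X0 {p : MvPolynomial (Fin 3) ℂ} {d : ℕ} (hd : 2 ≤ d) (hp : Lead p d) :
    Lead (X 0 + p) d := by
  constructor
  · refine (totalDegree_add _ _).trans ?_
    simp only [totalDegree_X]
    have h1 := hp.1
    omega
  · rw [coeff_add, hp.2]
    rw [coeff_X', if_neg, zero_add]
    intro hcontra
    have := congrFun (congrArg (fun f : Fin 3 →₀ ℕ => (f : Fin 3 → ℕ)) hcontra) 0
    simp [Finsupp.single_apply] at this
    omega

end AuxTame

theorem no_name (d₃ : ℕ) (h : 4 ≤ d₃) (h5 : d₃ ≠ 5) :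
    ∃ F : MvPolynomial (Fin 3) ℂ ≃ₐ[ℂ] MvPolynomial (Fin 3) ℂ,
      IsTame F ∧ mdeg F = ![3, 4, d₃] := by
  obtain ⟨a, b, hab⟩ : ∃ a b : ℕ, d₃ = 3 * a + 4 * b := by
    have h3 : d₃ % 3 = 0 ∨ d₃ % 3 = 1 ∨ d₃ % 3 = 2 := by omega
    rcases h3 with h3 | h3 | h3
    · exact ⟨d₃ / 3, 0, by omega⟩
    · exact ⟨(d₃ - 4) / 3, 1, by omega⟩
    · exact ⟨(d₃ - 8) / 3, 2, by omega⟩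
  refine ⟨T2aux * Saux * T1aux a b, ?_, ?_⟩
  · apply Subgroup.mul_mem
    apply Subgroup.mul_mem
    · exact Subgroup.subset_closure (Or.inr isTriangular_T2aux)
    · exact Subgroup.subset_closure (Or.inl isLinear_Saux)
    · exact Subgroup.subset_closure (Or.inr (isTriangular_T1aux a b))
  · funext i
    fin_cases i
    · show ((T2aux * Saux * T1aux a b) (X 0)).totalDegree = 3
      rw [AlgEquiv.mul_apply, AlgEquiv.mul_apply, T1aux_X0, Saux_X]
      have : finRotate 3 (0 : Fin 3) = 1 := by decide
      rw [this, T2aux_X1]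
      exact totalDegree_of_lead (by norm_num) lead_P
    · show ((T2aux * Saux * T1aux a b) (X 1)).totalDegree = 4
      rw [AlgEquiv.mul_apply, AlgEquiv.mul_apply, T1aux_X1, Saux_X]
      have : finRotate 3 (1 : Fin 3) = 2 := by decide
      rw [this, T2aux_X2]
      exact totalDegree_of_lead (by norm_num) lead_Q
    · show ((T2aux * Saux * T1aux a b) (X 2)).totalDegree = d₃
      rw [AlgEquiv.mul_apply, AlgEquiv.mul_apply, T1aux_X2, map_add, map_mul, map_pow, map_pow,
        Saux_X, Saux_X, Saux_X]
      have h0 : finRotate 3 (0 : Fin 3) = 1 := by decide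
      have h1 : finRotate 3 (1 : Fin 3) = 2 := by decide
      have h2 : finRotate 3 (2 : Fin 3) = 0 := by decide
      rw [h0, h1, h2, map_add, map_mul, map_pow, map_pow, T2aux_X0, T2aux_X1, T2aux_X2]
      have hlead : Lead ((X 1 + X 0 ^ 3) ^ a * (X 2 + X 0 ^ 4) ^ b) (a * 3 + b * 4) :=
        lead_mul (lead_pow lead_P a) (lead_pow lead_Q b)
      have habd : a * 3 + b * 4 = d₃ := by omega
      rw [habd] at hlead
      exact totalDegree_of_lead (by omega) (lead_add_X0 (by omega) hlead)
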